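/- Define the UMBC encoder f(X) = diag(f̄(X))⁻¹ f̂(X) where f̂(X) = σ(QK(X)ᵀ)V(X) and f̄(X) = σ(QK(X)ᵀ)𝟙_N, with σ strictly positive elementwise. Then f is mini-batch consistent: for any rowwise partition X = [S₁; ...; S_l], f(X) = diag(Σᵢ f̄(Sᵢ))⁻¹ (Σᵢ f̂(Sᵢ)). In particular, f(X) can be recovered exactly from the pairs (f̂(Sᵢ), f̄(Sᵢ)) alone. -/
import Mathlib


open Matrix

/-- Rowwise application of the feature extractor φ. -/
noncomputable def Phi {dx dh : ℕ} {I : Type} (φ : (Fin dx → ℝ) → Fin dh → ℝ)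
    (X : Matrix I (Fin dx) ℝ) : Matrix I (Fin dh) ℝ :=
  Matrix.of fun n => φ (X n)

/-- Un-normalized cross attention f̂(X) = σ(Q K(X)ᵀ) V(X). -/
noncomputable def fhat {k dx dh d : ℕ} {I : Type} [Fintype I] (σ : ℝ → ℝ)
    (φ : (Fin dx → ℝ) → Fin dh → ℝ) (Q : Matrix (Fin k) (Fin d) ℝ)
    (WK WV : Matrix (Fin dh) (Fin d) ℝ) (X : Matrix I (Fin dx) ℝ) :
    Matrix (Fin k) (Fin d) ℝ :=
  (Matrix.of fun i n => σ ((Q * (Phi φ X * WK)ᵀ) i n)) * (Phi φ X * WV)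

/-- Normalization vector f̄(X) = σ(Q K(X)ᵀ) 𝟙 ∈ ℝᵏ. -/
noncomputable def fbar {k dx dh d : ℕ} {I : Type} [Fintype I] (σ : ℝ → ℝ)
    (φ : (Fin dx → ℝ) → Fin dh → ℝ) (Q : Matrix (Fin k) (Fin d) ℝ)
    (WK : Matrix (Fin dh) (Fin d) ℝ) (X : Matrix I (Fin dx) ℝ) : Fin k → ℝ :=
  (Matrix.of fun i n => σ ((Q * (Phi φ X * WK)ᵀ) i n)) *ᵥ (fun _ => (1 : ℝ))

/-- UMBC encoder f(X) = diag(f̄(X))⁻¹ f̂(X), where diag(v)⁻¹ is the diagonal matrix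
with entries 1/vᵢ. -/
noncomputable def umbc {k dx dh d : ℕ} {I : Type} [Fintype I] (σ : ℝ → ℝ)
    (φ : (Fin dx → ℝ) → Fin dh → ℝ) (Q : Matrix (Fin k) (Fin d) ℝ)
    (WK WV : Matrix (Fin dh) (Fin d) ℝ) (X : Matrix I (Fin dx) ℝ) :
    Matrix (Fin k) (Fin d) ℝ :=
  Matrix.diagonal (fun i => (fbar σ φ Q WK X i)⁻¹) * fhat σ φ Q WK WV X

/-- the UMBC encoder is mini-batch consistent: for any rowwise partition
of X into blocks S₁,…,S_l, f(X) = diag(Σ_b f̄(S_b))⁻¹ (Σ_b f̂(S_b)).  In particular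
f(X) is recovered exactly from the pairs (f̂(S_b), f̄(S_b)) alone. -/
theorem stmt4 {k dx dh d l : ℕ} (σ : ℝ → ℝ) (hσ : ∀ x, 0 < σ x)
    (φ : (Fin dx → ℝ) → Fin dh → ℝ) (Q : Matrix (Fin k) (Fin d) ℝ)
    (WK WV : Matrix (Fin dh) (Fin d) ℝ) (Ns : Fin l → ℕ)
    (X : Matrix ((b : Fin l) × Fin (Ns b)) (Fin dx) ℝ) :
    umbc σ φ Q WK WV X =
      Matrix.diagonal (fun i => ((∑ b : Fin l, fbar σ φ Q WK (X.submatrix (Sigma.mk b) id)) i)⁻¹) *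
        ∑ b : Fin l, fhat σ φ Q WK WV (X.submatrix (Sigma.mk b) id) := by
  have key : ∀ (b : Fin l) (i : Fin k) (n : Fin (Ns b)),
      (Q * (Phi φ X * WK)ᵀ) i ⟨b, n⟩ =
        (Q * (Phi φ (X.submatrix (Sigma.mk b) id) * WK)ᵀ) i n := by
    intro b i n
    rfl
  have keyV : ∀ (b : Fin l) (n : Fin (Ns b)) (j : Fin d),
      (Phi φ X * WV) ⟨b, n⟩ j = (Phi φ (X.submatrix (Sigma.mk b) id) * WV) n j := by
    intro b n j
    rfl
  have h1 : fbar σ φ Q WK X =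
      ∑ b : Fin l, fbar σ φ Q WK (X.submatrix (Sigma.mk b) id) := by
    funext i
    simp only [fbar, Matrix.mulVec, dotProduct, Matrix.of_apply, mul_one,
      Finset.sum_apply]
    rw [← Finset.univ_sigma_univ, Finset.sum_sigma]
    exact Finset.sum_congr rfl fun b _ => Finset.sum_congr rfl fun n _ => rfl
  have h2 : fhat σ φ Q WK WV X =
      ∑ b : Fin l, fhat σ φ Q WK WV (X.submatrix (Sigma.mk b) id) := by
    ext i j
    simp only [fhat, Matrix.mul_apply, Matrix.of_apply, Matrix.sum_apply]
    rw [← Finset.univ_sigma_univ, Finset.sum_sigma]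
    exact Finset.sum_congr rfl fun b _ => Finset.sum_congr rfl fun n _ => rfl
  rw [umbc, h1, h2]
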